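/- arXiv:2101.00399 — 3 statements merged into one kernel-verified Lean document; each statement's English description precedes it below -/
import Mathlib

section
/- Let N = {1,...,n} be students and M = {1,...,m} colleges with quotas q_j. A matching is a function μ: N → M ∪ {0} with |μ⁻¹(j)| ≤ q_j for every j ∈ M. If μ is stable (individually rational and has no blocking pair) under a profile of strict preferences, then μ is a fixed point of the re-stabilization operator T, i.e., T(μ) = μ, and conversely any fixed point of T in the set of 1-envy-free matchings is stable. -/
attribute [local instance] Classical.propDecidable

noncomputable section

/-- A many-to-one college admissions market (college admissions model) with `n`
students and `m` colleges.  Strict preferences are encoded by injective rank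
functions (a smaller rank means more preferred); `none` is the outside option
`0` (being unmatched / an unfilled position). -/
structure Market (n m : ℕ) where
  quota : Fin m → ℕ
  sRank : Fin n → Option (Fin m) → ℕ
  sRank_inj : ∀ i, Function.Injective (sRank i)
  cRank : Fin m → Option (Fin n) → ℕ
  cRank_inj : ∀ j, Function.Injective (cRank j)

namespace Market

variable {n m : ℕ}

/-- Student `i` strictly prefers `a` to `b`. -/
def sPref (M : Market n m) (i : Fin n) (a b : Option (Fin m)) : Prop :=
  M.sRank i a < M.sRank i b

/-- College `j` strictly prefers `a` to `b`. -/
def cPref (M : Market n m) (j : Fin m) (a b : Option (Fin n)) : Prop :=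
  M.cRank j a < M.cRank j b

/-- The set `μ⁻¹(j)` of students matched to college `j` under `μ`. -/
def assigned (M : Market n m) (μ : Fin n → Option (Fin m)) (j : Fin m) : Finset (Fin n) :=
  Finset.univ.filter fun i => μ i = some j

/-- `μ` is a (capacity-feasible) matching: `|μ⁻¹(j)| ≤ q_j` for every college. -/
def IsMatching (M : Market n m) (μ : Fin n → Option (Fin m)) : Prop :=
  ∀ j, (M.assigned μ j).card ≤ M.quota j

/-- Individual rationality of `μ`. -/
def IndRational (M : Market n m) (μ : Fin n → Option (Fin m)) : Prop :=
  (∀ i, ¬ M.sPref i none (μ i)) ∧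
  (∀ j i', μ i' = some j → ¬ M.cPref j none (some i'))

/-- `(i, j)` is a blocking pair for `μ`. -/
def Blocks (M : Market n m) (μ : Fin n → Option (Fin m)) (i : Fin n) (j : Fin m) : Prop :=
  M.sPref i (some j) (μ i) ∧
  (((M.assigned μ j).card < M.quota j ∧ M.cPref j (some i) none) ∨
   ((M.assigned μ j).card = M.quota j ∧ ∃ i' ∈ M.assigned μ j, M.cPref j (some i) (some i')))

/-- `μ` is stable: individually rational with no blocking pair. -/
def Stable (M : Market n m) (μ : Fin n → Option (Fin m)) : Prop :=
  M.IndRational μ ∧ ∀ i j, ¬ M.Blocks μ i j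

/-- `μ` is envy-free: individually rational and any blocking pair involves an
unmatched student. -/
def EnvyFree (M : Market n m) (μ : Fin n → Option (Fin m)) : Prop :=
  M.IndRational μ ∧ ∀ i j, M.Blocks μ i j → μ i = none

/-- `μ` is 1-envy-free: envy-free, and either stable or there is one and only
one student who belongs to every blocking pair. -/
def OneEnvyFree (M : Market n m) (μ : Fin n → Option (Fin m)) : Prop :=
  M.EnvyFree μ ∧ (M.Stable μ ∨ ∃! i : Fin n, ∀ i' j, M.Blocks μ i' j → i' = i)

/-- `(i, j)` is a student-maximal blocking pair: `j` is `i`'s most preferred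
college among those with whom `i` forms a blocking pair. -/
def StudentMaxBlock (M : Market n m) (μ : Fin n → Option (Fin m)) (i : Fin n) (j : Fin m) :
    Prop :=
  M.Blocks μ i j ∧ ∀ j', M.Blocks μ i j' → M.sRank i (some j) ≤ M.sRank i (some j')

/-- `T` is the re-stabilization operator: on a 1-envy-free matching with no
blocking pair it is the identity; otherwise it satisfies the unique
student-maximal blocking pair `(i, j)`, matching `i` to `j`, keeping everyone
not matched to `j` unchanged, keeping the students of `j` if `j` has a vacancy
or if they are not `j`'s worst current student, and unmatching `j`'s worst
current student otherwise. -/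
def IsTStep (M : Market n m) (T : (Fin n → Option (Fin m)) → Fin n → Option (Fin m)) : Prop :=
  ∀ μ, M.IsMatching μ → M.OneEnvyFree μ →
    ((∀ i j, ¬ M.Blocks μ i j) → T μ = μ) ∧
    ∀ i j, M.StudentMaxBlock μ i j →
      T μ i = some j ∧
      ∀ i', i' ≠ i →
        (μ i' ≠ some j → T μ i' = μ i') ∧
        (μ i' = some j →
          ((M.assigned μ j).card < M.quota j → T μ i' = μ i') ∧
          ((M.assigned μ j).card = M.quota j →
            ((∃ i'' ∈ M.assigned μ j, M.cPref j (some i') (some i'')) → T μ i' = μ i') ∧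
            ((∀ i'' ∈ M.assigned μ j, i'' ≠ i' → M.cPref j (some i'') (some i')) →
              T μ i' = none)))

/-- `Tstar` iterates `T` finitely many times from any 1-envy-free matching
until a fixed point of `T` is reached. -/
def IsTStarOf (M : Market n m) (T Tstar : (Fin n → Option (Fin m)) → Fin n → Option (Fin m)) :
    Prop :=
  ∀ μ, M.IsMatching μ → M.OneEnvyFree μ →
    ∃ r : ℕ, Tstar μ = T^[r] μ ∧ T (Tstar μ) = Tstar μ

/-- A one-step responsive improvement for college `j`: `A` is obtained from `B`
either by filling a vacancy with an acceptable student, or by swapping a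
student of `B` for a strictly preferred outside student. -/
def SwapImproves (M : Market n m) (j : Fin m) (A B : Finset (Fin n)) : Prop :=
  (∃ i₁, i₁ ∉ B ∧ A = insert i₁ B ∧ M.cPref j (some i₁) none) ∨
  (∃ i₁ i₂, i₂ ∈ B ∧ i₁ ∉ B ∧ A = insert i₁ (B.erase i₂) ∧ M.cPref j (some i₁) (some i₂))

/-- The responsive extension of college `j`'s strict preference to sets of
students: the transitive closure of one-step responsive improvements. -/
def SetPref (M : Market n m) (j : Fin m) (A B : Finset (Fin n)) : Prop :=
  Relation.TransGen (M.SwapImproves j) A B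

/-- `μ₁ ≿ μ₂`: every college either gets the same set of students or a
strictly (responsively) preferred set. -/
def CollegesWeakPref (M : Market n m) (μ₁ μ₂ : Fin n → Option (Fin m)) : Prop :=
  ∀ j, M.assigned μ₁ j = M.assigned μ₂ j ∨ M.SetPref j (M.assigned μ₁ j) (M.assigned μ₂ j)

/-- `μ` is the student-optimal stable matching: a stable matching that every
student weakly prefers to any other stable matching. -/
def IsSOSM (M : Market n m) (μ : Fin n → Option (Fin m)) : Prop :=
  M.IsMatching μ ∧ M.Stable μ ∧
    ∀ μ', M.IsMatching μ' → M.Stable μ' → ∀ i, M.sRank i (μ i) ≤ M.sRank i (μ' i)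

/-- `μ` (with student `i` unmatched) is a stable matching of the market in
which student `i` has been removed. -/
def StableAway (M : Market n m) (i : Fin n) (μ : Fin n → Option (Fin m)) : Prop :=
  μ i = none ∧
  (∀ i', i' ≠ i → ¬ M.sPref i' none (μ i')) ∧
  (∀ j i', i' ≠ i → μ i' = some j → ¬ M.cPref j none (some i')) ∧
  (∀ i' j, i' ≠ i → ¬ M.Blocks μ i' j)

/-- `μ` (with student `i` unmatched) is the student-optimal stable matching of
the market in which student `i` has been removed. -/
def IsSOSMAway (M : Market n m) (i : Fin n) (μ : Fin n → Option (Fin m)) : Prop :=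
  M.IsMatching μ ∧ M.StableAway i μ ∧
    ∀ μ', M.IsMatching μ' → M.StableAway i μ' →
      ∀ i', i' ≠ i → M.sRank i' (μ i') ≤ M.sRank i' (μ' i')

/-- The maximum rank difference `h(w)` among the colleges' preferences: the
largest rank gap `|w_j(i₁) − w_j(i₂)|` over colleges `j` and pairs `(i₁, i₂)`
on whose relative ranking at least two colleges disagree (`0` if there is no
disagreement). -/
def maxRankDiff (M : Market n m) : ℕ :=
  Finset.univ.sup fun j : Fin m =>
    (Finset.univ.filter fun q : Option (Fin n) × Option (Fin n) =>
        ∃ j₁ j₂ : Fin m, M.cPref j₁ q.1 q.2 ∧ M.cPref j₂ q.2 q.1).sup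
      fun q => ((M.cRank j q.1 : ℤ) - (M.cRank j q.2 : ℤ)).natAbs

/-- `N*_{j,1}(μ) = μ⁻¹(j) \ μ*⁻¹(j)` : students of `j` under `μ` but not `μs`. -/
def Nset1 (M : Market n m) (μ μs : Fin n → Option (Fin m)) (j : Fin m) : Finset (Fin n) :=
  M.assigned μ j \ M.assigned μs j

/-- `N*_{j,0}(μ) = μ*⁻¹(j) \ μ⁻¹(j)` : students of `j` under `μs` but not `μ`. -/
def Nset0 (M : Market n m) (μ μs : Fin n → Option (Fin m)) (j : Fin m) : Finset (Fin n) :=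
  M.assigned μs j \ M.assigned μ j

/-- The rank `r_{j,i}(A)` of student `i` within the set `A` according to `≻_j`. -/
def rankIn (M : Market n m) (j : Fin m) (i : Fin n) (A : Finset (Fin n)) : ℕ :=
  (A.filter fun i' => M.cPref j (some i') (some i)).card + 1

/-- `a ▷_j b`: student `a` displaces student `b` from college `j` (as we move
from the SOSM `μs` to the stable matching `μ`). -/
def Displaces (M : Market n m) (μ μs : Fin n → Option (Fin m)) (j : Fin m) (a b : Fin n) :
    Prop :=
  a ∈ M.Nset1 μ μs j ∧ b ∈ M.Nset0 μ μs j ∧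
    M.rankIn j a (M.Nset1 μ μs j) = M.rankIn j b (M.Nset0 μ μs j)

/-- `a ▷ b`: `a` displaces `b` from some college. -/
def DisplacesAny (M : Market n m) (μ μs : Fin n → Option (Fin m)) (a b : Fin n) : Prop :=
  ∃ j, M.Displaces μ μs j a b

/-- The positions of the related one-to-one market: college `j` is split into
`q_j` ordered positions. -/
abbrev Position (M : Market n m) : Type := (j : Fin m) × Fin (M.quota j)

/-- Student `i`'s strict preference over positions in the related one-to-one
market: positions of strictly better colleges are better, and within a college
a smaller index is better. -/
def PosBetter (M : Market n m) (i : Fin n) :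
    Option (Position M) → Option (Position M) → Prop
  | some q, some q' =>
      M.sRank i (some q.1) < M.sRank i (some q'.1) ∨ (q.1 = q'.1 ∧ (q.2 : ℕ) < (q'.2 : ℕ))
  | some q, none => M.sRank i (some q.1) < M.sRank i none
  | none, some q' => M.sRank i none < M.sRank i (some q'.1)
  | none, none => False

/-- `(μN, μM)` is the one-to-one matching of the related market corresponding
to the many-to-one matching `μ`: the students of `μ⁻¹(j)` occupy, in the order
of college `j`'s preference, the ordered positions of `j`. -/
def Corresponds (M : Market n m) (μ : Fin n → Option (Fin m))
    (μN : Fin n → Option (Position M)) (μM : Position M → Option (Fin n)) : Prop :=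
  (∀ i p, μN i = some p ↔ μM p = some i) ∧
  (∀ i j, (∃ s, μN i = some ⟨j, s⟩) ↔ μ i = some j) ∧
  (∀ i j (s : Fin (M.quota j)), μN i = some ⟨j, s⟩ →
    (s : ℕ) = ((M.assigned μ j).filter fun i' => M.cPref j (some i') (some i)).card)

/-- `(i, p)` is a blocking pair in the related one-to-one market. -/
def PosBlocks (M : Market n m) (μN : Fin n → Option (Position M))
    (μM : Position M → Option (Fin n)) (i : Fin n) (p : Position M) : Prop :=
  M.PosBetter i (some p) (μN i) ∧ M.cPref p.1 (some i) (μM p)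

/-- Individual rationality in the related one-to-one market. -/
def PosIR (M : Market n m) (μN : Fin n → Option (Position M))
    (μM : Position M → Option (Fin n)) : Prop :=
  (∀ i, ¬ M.PosBetter i none (μN i)) ∧ (∀ p : Position M, ¬ M.cPref p.1 none (μM p))

/-- Stability in the related one-to-one market. -/
def PosStable (M : Market n m) (μN : Fin n → Option (Position M))
    (μM : Position M → Option (Fin n)) : Prop :=
  M.PosIR μN μM ∧ ∀ i p, ¬ M.PosBlocks μN μM i p

/-- Simplicity in the related one-to-one market: individually rational and any
blocking pair involves an unmatched student. -/
def PosSimple (M : Market n m) (μN : Fin n → Option (Position M))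
    (μM : Position M → Option (Fin n)) : Prop :=
  M.PosIR μN μM ∧ ∀ i p, M.PosBlocks μN μM i p → μN i = none

/-- 1-simplicity in the related one-to-one market: simple, and either stable or
there is one and only one student belonging to every blocking pair. -/
def PosOneSimple (M : Market n m) (μN : Fin n → Option (Position M))
    (μM : Position M → Option (Fin n)) : Prop :=
  M.PosSimple μN μM ∧
    (M.PosStable μN μM ∨ ∃! i : Fin n, ∀ i' p, M.PosBlocks μN μM i' p → i' = i)

end Market

/-- A generic one-to-one matching market with `n` students and `p` positions,
with strict preferences encoded by injective rank functions. -/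
structure OOMarket (n p : ℕ) where
  sRank : Fin n → Option (Fin p) → ℕ
  sRank_inj : ∀ i, Function.Injective (sRank i)
  pRank : Fin p → Option (Fin n) → ℕ
  pRank_inj : ∀ c, Function.Injective (pRank c)

namespace OOMarket

variable {n p : ℕ}

/-- `(μN, μM)` is a one-to-one matching. -/
def IsOOMatching (O : OOMarket n p) (μN : Fin n → Option (Fin p))
    (μM : Fin p → Option (Fin n)) : Prop :=
  ∀ i c, μN i = some c ↔ μM c = some i

/-- `(i, c)` is a blocking pair for `(μN, μM)`. -/
def OOBlocks (O : OOMarket n p) (μN : Fin n → Option (Fin p))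
    (μM : Fin p → Option (Fin n)) (i : Fin n) (c : Fin p) : Prop :=
  O.sRank i (some c) < O.sRank i (μN i) ∧ O.pRank c (some i) < O.pRank c (μM c)

/-- Individual rationality. -/
def OOIR (O : OOMarket n p) (μN : Fin n → Option (Fin p))
    (μM : Fin p → Option (Fin n)) : Prop :=
  (∀ i, ¬ O.sRank i none < O.sRank i (μN i)) ∧ (∀ c, ¬ O.pRank c none < O.pRank c (μM c))

/-- Stability. -/
def OOStable (O : OOMarket n p) (μN : Fin n → Option (Fin p))
    (μM : Fin p → Option (Fin n)) : Prop :=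
  O.OOIR μN μM ∧ ∀ i c, ¬ O.OOBlocks μN μM i c

/-- Simplicity: individually rational and every blocking pair involves an
unmatched student. -/
def OOSimple (O : OOMarket n p) (μN : Fin n → Option (Fin p))
    (μM : Fin p → Option (Fin n)) : Prop :=
  O.OOIR μN μM ∧ ∀ i c, O.OOBlocks μN μM i c → μN i = none

/-- 1-simplicity: simple, and either stable or there is one and only one
student belonging to every blocking pair. -/
def OOOneSimple (O : OOMarket n p) (μN : Fin n → Option (Fin p))
    (μM : Fin p → Option (Fin n)) : Prop :=
  O.OOSimple μN μM ∧
    (O.OOStable μN μM ∨ ∃! i : Fin n, ∀ i' c, O.OOBlocks μN μM i' c → i' = i)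

end OOMarket

end

/-- a stable matching is a fixed point of the re-stabilization
operator `T`, and conversely any fixed point of `T` among 1-envy-free
matchings is stable. -/
theorem stable_iff_fixed_point_of_T {n m : ℕ} (M : Market n m)
    (T : (Fin n → Option (Fin m)) → Fin n → Option (Fin m)) (hT : M.IsTStep T)
    (μ : Fin n → Option (Fin m)) (hμ : M.IsMatching μ) :
    (M.Stable μ → T μ = μ) ∧ (M.OneEnvyFree μ → T μ = μ → M.Stable μ) := by
  constructor
  · intro hs
    have h1ef : M.OneEnvyFree μ :=
      ⟨⟨hs.1, fun i j hb => absurd hb (hs.2 i j)⟩, Or.inl hs⟩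
    exact (hT μ hμ h1ef).1 hs.2
  · intro h1ef hfix
    refine ⟨h1ef.1.1, fun i j hb => ?_⟩
    -- pick a student-maximal blocking pair for i
    set S : Finset (Fin m) := Finset.univ.filter fun j' => M.Blocks μ i j' with hS
    have hjS : j ∈ S := by simp [hS, hb]
    obtain ⟨j₀, hj₀S, hmin⟩ := S.exists_min_image (fun j' => M.sRank i (some j'))
      ⟨j, hjS⟩
    have hbj₀ : M.Blocks μ i j₀ := by
      have := hj₀S; simp [hS] at this; exact this
    have hsmb : M.StudentMaxBlock μ i j₀ := by
      refine ⟨hbj₀, fun j' hb' => hmin j' ?_⟩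
      simp [hS, hb']
    have hTi := ((hT μ hμ h1ef).2 i j₀ hsmb).1
    rw [hfix] at hTi
    have := hbj₀.1
    rw [hTi] at this
    exact absurd this (lt_irrefl _)
end

section
/- For every 1-envy-free matching μ in a finite many-to-one matching market with strict responsive preferences: (i) T(μ) ≿ μ, i.e., every college weakly prefers its assignment under T(μ) to that under μ (with strict preference for at most one college); and (ii) there exists a finite sequence μ = μ₀, μ₁, ..., μ_r with μ_{r'} = T(μ_{r'-1}) for each r' and μ_r stable. -/
attribute [local instance] Classical.propDecidable

namespace Market

variable {n m : ℕ}

lemma mem_assigned {M : Market n m} {μ : Fin n → Option (Fin m)} {j : Fin m} {a : Fin n} :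
    a ∈ M.assigned μ j ↔ μ a = some j := by simp [Market.assigned]

lemma cRank_lt_of_le_ne {M : Market n m} {j : Fin m} {a b : Option (Fin n)}
    (h : M.cRank j a ≤ M.cRank j b) (hne : a ≠ b) : M.cRank j a < M.cRank j b :=
  lt_of_le_of_ne h fun he => hne (M.cRank_inj j he)

/-- Potential of a set of students for college `j`. -/
def phi (M : Market n m) (j : Fin m) (A : Finset (Fin n)) : ℤ :=
  ∑ i ∈ A, ((M.cRank j none : ℤ) - M.cRank j (some i))

lemma phi_lt_of_swap {M : Market n m} {j : Fin m} {A B : Finset (Fin n)}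
    (h : M.SwapImproves j A B) : M.phi j B < M.phi j A := by
  rcases h with ⟨i₁, hi₁, rfl, hpref⟩ | ⟨i₁, i₂, hi₂, hi₁, rfl, hpref⟩
  · simp only [phi]
    rw [Finset.sum_insert hi₁]
    have h2 : (M.cRank j (some i₁) : ℤ) < M.cRank j none := by exact_mod_cast hpref
    linarith
  · have hi₁' : i₁ ∉ B.erase i₂ := fun h => hi₁ (Finset.mem_of_mem_erase h)
    have key : ∑ i ∈ B.erase i₂, ((M.cRank j none : ℤ) - M.cRank j (some i))
        + ((M.cRank j none : ℤ) - M.cRank j (some i₂))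
        = ∑ i ∈ B, ((M.cRank j none : ℤ) - M.cRank j (some i)) :=
      Finset.sum_erase_add _ _ hi₂
    simp only [phi]
    rw [Finset.sum_insert hi₁']
    have h2 : (M.cRank j (some i₁) : ℤ) < M.cRank j (some i₂) := by exact_mod_cast hpref
    linarith
  
lemma phi_lt_of_setPref {M : Market n m} {j : Fin m} {A B : Finset (Fin n)}
    (h : M.SetPref j A B) : M.phi j B < M.phi j A := by
  induction h with
  | single h => exact phi_lt_of_swap h
  | tail _ h ih => exact lt_trans (phi_lt_of_swap h) ih

lemma setPref_irrefl {M : Market n m} {j : Fin m} {A : Finset (Fin n)}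
    (h : M.SetPref j A A) : False := lt_irrefl _ (phi_lt_of_setPref h)

/-- Total potential of a matching. -/
def phiTot (M : Market n m) (μ : Fin n → Option (Fin m)) : ℤ :=
  ∑ j, M.phi j (M.assigned μ j)

/-- Upper bound for the total potential. -/
def phiBound (M : Market n m) : ℤ :=
  ∑ j, ∑ i : Fin n, |(M.cRank j none : ℤ) - M.cRank j (some i)|

lemma phiTot_le (M : Market n m) (μ : Fin n → Option (Fin m)) :
    M.phiTot μ ≤ M.phiBound := by
  refine Finset.sum_le_sum fun j _ => ?_
  calc M.phi j (M.assigned μ j)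
      ≤ ∑ i ∈ M.assigned μ j, |(M.cRank j none : ℤ) - M.cRank j (some i)| :=
        Finset.sum_le_sum fun i _ => le_abs_self _
    _ ≤ ∑ i : Fin n, |(M.cRank j none : ℤ) - M.cRank j (some i)| :=
        Finset.sum_le_sum_of_subset_of_nonneg (Finset.subset_univ _)
          (fun _ _ _ => abs_nonneg _)

/-- Key step lemma: if a 1-envy-free matching has a blocking pair, then `T μ`
is again a 1-envy-free matching which improves exactly one college. -/
lemma step_lemma {M : Market n m} {T : (Fin n → Option (Fin m)) → Fin n → Option (Fin m)}
    (hT : M.IsTStep T) {μ : Fin n → Option (Fin m)} (hμ : M.IsMatching μ)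
    (h1 : M.OneEnvyFree μ) (hb : ∃ a b, M.Blocks μ a b) :
    M.IsMatching (T μ) ∧ M.OneEnvyFree (T μ) ∧
    ∃ j₀, (∀ j', j' ≠ j₀ → M.assigned (T μ) j' = M.assigned μ j') ∧
      M.SetPref j₀ (M.assigned (T μ) j₀) (M.assigned μ j₀) := by
  classical
  obtain ⟨a₀, b₀, hab⟩ := hb
  have hstab : ¬ M.Stable μ := fun hs => hs.2 a₀ b₀ hab
  obtain ⟨i, hiP, -⟩ := h1.2.resolve_left hstab
  have hib : M.Blocks μ i b₀ := (hiP a₀ b₀ hab) ▸ hab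
  have hi0 : μ i = none := h1.1.2 i b₀ hib
  obtain ⟨j, hjmem, hjmin⟩ := Finset.exists_min_image
    (Finset.univ.filter fun j => M.Blocks μ i j) (fun j => M.sRank i (some j))
    ⟨b₀, by simp [hib]⟩
  have hjb : M.Blocks μ i j := (Finset.mem_filter.mp hjmem).2
  have hmax : M.StudentMaxBlock μ i j := ⟨hjb, fun j' hj' => hjmin j' (by simp [hj'])⟩
  obtain ⟨hTi, hrest⟩ := (hT μ hμ h1).2 i j hmax
  set Aj := M.assigned μ j with hAj
  have hnotin : i ∉ Aj := by simp [hAj, mem_assigned, hi0]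
  have hIRlt : ∀ w ∈ Aj, M.cRank j (some w) < M.cRank j none := fun w hw =>
    cRank_lt_of_le_ne (not_lt.mp (h1.1.1.2 j w (mem_assigned.mp hw))) (by simp)
  have hsS : M.sRank i (some j) < M.sRank i none := by
    have := hjb.1; rwa [hi0] at this
  rcases lt_or_eq_of_le (hμ j) with hlt | heq
  · -- vacancy case
    have hCi : M.cRank j (some i) < M.cRank j none := by
      rcases hjb.2 with ⟨-, h⟩ | ⟨hc, -⟩
      · exact h
      · exact absurd hc (Nat.ne_of_lt hlt)
    have hkeep : ∀ a, a ≠ i → T μ a = μ a := by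
      intro a ha
      by_cases haj : μ a = some j
      · exact ((hrest a ha).2 haj).1 hlt
      · exact (hrest a ha).1 haj
    have hasg : ∀ j', j' ≠ j → M.assigned (T μ) j' = M.assigned μ j' := by
      intro j' hj'
      ext a
      by_cases ha : a = i
      · subst ha
        simp only [mem_assigned, hTi, hi0]
        exact iff_of_false (fun h => hj' (Option.some_inj.mp h).symm) (by simp)
      · simp [mem_assigned, hkeep a ha]
    have hasgj : M.assigned (T μ) j = insert i Aj := by
      ext a
      by_cases ha : a = i
      · subst ha; simp [mem_assigned, hTi]
      · simp [mem_assigned, hkeep a ha, ha, hAj]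
    have hmatch : M.IsMatching (T μ) := by
      intro j'
      by_cases hj' : j' = j
      · subst hj'; rw [hasgj, Finset.card_insert_of_notMem hnotin]
        exact hlt
      · rw [hasg j' hj']; exact hμ j'
    have hswap : M.SetPref j (M.assigned (T μ) j) (M.assigned μ j) := by
      apply Relation.TransGen.single
      rw [hasgj]
      exact Or.inl ⟨i, hnotin, rfl, hCi⟩
    -- any blocking pair of T μ would give a blocking pair of μ not involving i
    have hnoblk : ∀ a b, ¬ M.Blocks (T μ) a b := by
      intro a b hblk
      by_cases ha : a = i
      · rw [ha] at hblk
        have hs : M.sRank i (some b) < M.sRank i (some j) := by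
          have := hblk.1; rwa [hTi] at this
        have hbj : b ≠ j := fun h => absurd hs (by rw [h]; exact lt_irrefl _)
        have hBb : M.Blocks μ i b := by
          refine ⟨by rw [hi0]; exact lt_trans hs hsS, ?_⟩
          have := hblk.2; rwa [hasg b hbj] at this
        exact absurd (hmax.2 b hBb) (not_le.mpr hs)
      · have hBb : M.Blocks μ a b := by
          refine ⟨by have := hblk.1; rwa [hkeep a ha] at this, ?_⟩
          by_cases hbj : b = j
          · subst hbj
            have h2 := hblk.2
            rw [hasgj, Finset.card_insert_of_notMem hnotin] at h2
            rcases h2 with ⟨h₁, h₂⟩ | ⟨h₁, w, hw, hcw⟩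
            · exact Or.inl ⟨hlt, h₂⟩
            · refine Or.inl ⟨hlt, ?_⟩
              rcases Finset.mem_insert.mp hw with rfl | hwA
              · exact lt_trans hcw hCi
              · exact lt_trans hcw (hIRlt w hwA)
          · have := hblk.2; rwa [hasg b hbj] at this
        exact ha (hiP a b hBb)
    have hIR : M.IndRational (T μ) := by
      constructor
      · intro a
        by_cases ha : a = i
        · subst ha; rw [hTi]; exact fun h => absurd hsS (not_lt.mpr (le_of_lt h))
        · rw [hkeep a ha]; exact h1.1.1.1 a
      · intro j' a haj
        by_cases ha : a = i
        · subst ha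
          rw [hTi] at haj
          have : j' = j := (Option.some_inj.mp haj).symm
          subst this
          exact fun h => absurd hCi (not_lt.mpr (le_of_lt h))
        · rw [hkeep a ha] at haj; exact h1.1.1.2 j' a haj
    exact ⟨hmatch, ⟨⟨hIR, fun a b hb => absurd hb (hnoblk a b)⟩,
      Or.inl ⟨hIR, hnoblk⟩⟩, j, hasg, hswap⟩
  · -- full case
    obtain ⟨w₀, hw₀, hcw₀⟩ : ∃ w₀ ∈ Aj, M.cPref j (some i) (some w₀) := by
      rcases hjb.2 with ⟨hc, -⟩ | ⟨-, h⟩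
      · exact absurd heq (Nat.ne_of_lt hc)
      · exact h
    have hAjne : Aj.Nonempty := ⟨w₀, hw₀⟩
    obtain ⟨i₂, hi₂A, hi₂max⟩ := Finset.exists_max_image Aj
      (fun w => M.cRank j (some w)) hAjne
    have hworst : ∀ w ∈ Aj, w ≠ i₂ → M.cPref j (some w) (some i₂) := fun w hw hne =>
      cRank_lt_of_le_ne (hi₂max w hw) (by simpa using hne)
    have hi₂i : i₂ ≠ i := fun h => hnotin (h ▸ hi₂A)
    have hCi : M.cRank j (some i) < M.cRank j (some i₂) :=
      lt_of_lt_of_le hcw₀ (hi₂max w₀ hw₀)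
    have hTi₂ : T μ i₂ = none :=
      (((hrest i₂ hi₂i).2 (mem_assigned.mp hi₂A)).2 heq).2 hworst
    have hkeep : ∀ a, a ≠ i → a ≠ i₂ → T μ a = μ a := by
      intro a ha ha₂
      by_cases haj : μ a = some j
      · exact (((hrest a ha).2 haj).2 heq).1
          ⟨i₂, hi₂A, hworst a (mem_assigned.mpr haj) ha₂⟩
      · exact (hrest a ha).1 haj
    have hasg : ∀ j', j' ≠ j → M.assigned (T μ) j' = M.assigned μ j' := by
      intro j' hj'
      ext a
      by_cases ha : a = i
      · subst ha
        simp only [mem_assigned, hTi, hi0]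
        exact iff_of_false (fun h => hj' (Option.some_inj.mp h).symm) (by simp)
      · by_cases ha₂ : a = i₂
        · subst ha₂
          simp only [mem_assigned, hTi₂, mem_assigned.mp hi₂A]
          exact iff_of_false (by simp) (fun h => hj' (Option.some_inj.mp h).symm)
        · simp [mem_assigned, hkeep a ha ha₂]
    have hasgj : M.assigned (T μ) j = insert i (Aj.erase i₂) := by
      ext a
      by_cases ha : a = i
      · subst ha; simp [mem_assigned, hTi]
      · by_cases ha₂ : a = i₂
        · subst ha₂
          simp only [mem_assigned, hTi₂]
          exact iff_of_false (by simp) (by simp [Finset.mem_insert, hi₂i])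
        · simp [mem_assigned, hkeep a ha ha₂, ha, ha₂, hAj, Finset.mem_erase]
    have hinotin : i ∉ Aj.erase i₂ := fun h => hnotin (Finset.mem_of_mem_erase h)
    have hcard : (M.assigned (T μ) j).card = Aj.card := by
      rw [hasgj, Finset.card_insert_of_notMem hinotin, Finset.card_erase_of_mem hi₂A,
        Nat.sub_add_cancel (Finset.card_pos.mpr hAjne)]
    have hmatch : M.IsMatching (T μ) := by
      intro j'
      by_cases hj' : j' = j
      · subst hj'; rw [hcard, heq]
      · rw [hasg j' hj']; exact hμ j'
    have hswap : M.SetPref j (M.assigned (T μ) j) (M.assigned μ j) := by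
      apply Relation.TransGen.single
      rw [hasgj]
      exact Or.inr ⟨i, i₂, hi₂A, hnotin, rfl, hCi⟩
    -- the only possible blocking student of T μ is i₂
    have hA : ∀ a b, M.Blocks (T μ) a b → a = i₂ := by
      intro a b hblk
      by_cases ha₂ : a = i₂
      · exact ha₂
      by_cases ha : a = i
      · rw [ha] at hblk
        have hs : M.sRank i (some b) < M.sRank i (some j) := by
          have := hblk.1; rwa [hTi] at this
        have hbj : b ≠ j := fun h => absurd hs (by rw [h]; exact lt_irrefl _)
        have hBb : M.Blocks μ i b := by
          refine ⟨by rw [hi0]; exact lt_trans hs hsS, ?_⟩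
          have := hblk.2; rwa [hasg b hbj] at this
        exact absurd (hmax.2 b hBb) (not_le.mpr hs)
      · have hBb : M.Blocks μ a b := by
          refine ⟨by have := hblk.1; rwa [hkeep a ha ha₂] at this, ?_⟩
          by_cases hbj : b = j
          · subst hbj
            have h2 := hblk.2
            rw [hasgj] at h2
            rcases h2 with ⟨h₁, -⟩ | ⟨-, w, hw, hcw⟩
            · rw [← hasgj, hcard, heq] at h₁
              exact absurd h₁ (lt_irrefl _)
            · refine Or.inr ⟨heq, ?_⟩
              rcases Finset.mem_insert.mp hw with rfl | hwA
              · exact ⟨i₂, hi₂A, lt_trans hcw hCi⟩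
              · exact ⟨w, Finset.mem_of_mem_erase hwA, hcw⟩
          · have := hblk.2; rwa [hasg b hbj] at this
        exact absurd (hiP a b hBb) ha
    have hIR : M.IndRational (T μ) := by
      constructor
      · intro a
        by_cases ha : a = i
        · subst ha; rw [hTi]; exact fun h => absurd hsS (not_lt.mpr (le_of_lt h))
        · by_cases ha₂ : a = i₂
          · subst ha₂; rw [hTi₂]; exact lt_irrefl _
          · rw [hkeep a ha ha₂]; exact h1.1.1.1 a
      · intro j' a haj
        by_cases ha : a = i
        · subst ha
          rw [hTi] at haj
          have : j' = j := (Option.some_inj.mp haj).symm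
          subst this
          exact fun h => absurd (lt_trans hCi (hIRlt i₂ hi₂A)) (not_lt.mpr (le_of_lt h))
        · by_cases ha₂ : a = i₂
          · subst ha₂; rw [hTi₂] at haj; exact absurd haj (by simp)
          · rw [hkeep a ha ha₂] at haj; exact h1.1.1.2 j' a haj
    have hEF : M.EnvyFree (T μ) := ⟨hIR, fun a b hb => (hA a b hb) ▸ hTi₂⟩
    have h1' : M.OneEnvyFree (T μ) := by
      refine ⟨hEF, ?_⟩
      by_cases hbl : ∃ a b, M.Blocks (T μ) a b
      · obtain ⟨a', b', hb'⟩ := hbl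
        have ha' := hA a' b' hb'
        refine Or.inr ⟨i₂, hA, fun c hc => ?_⟩
        exact (hc a' b' hb').symm.trans ha'
      · push_neg at hbl
        exact Or.inl ⟨hIR, hbl⟩
    exact ⟨hmatch, h1', j, hasg, hswap⟩

lemma phiTot_lt_step {M : Market n m} {ν₁ ν₂ : Fin n → Option (Fin m)}
    (h : ∃ j₀, (∀ j', j' ≠ j₀ → M.assigned ν₁ j' = M.assigned ν₂ j') ∧
      M.SetPref j₀ (M.assigned ν₁ j₀) (M.assigned ν₂ j₀)) :
    M.phiTot ν₂ < M.phiTot ν₁ := by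
  obtain ⟨j₀, hne, hsp⟩ := h
  refine Finset.sum_lt_sum (fun j' _ => ?_) ⟨j₀, Finset.mem_univ _, phi_lt_of_setPref hsp⟩
  by_cases hj' : j' = j₀
  · subst hj'; exact le_of_lt (phi_lt_of_setPref hsp)
  · rw [hne j' hj']

lemma reach_stable {M : Market n m} {T : (Fin n → Option (Fin m)) → Fin n → Option (Fin m)}
    (hT : M.IsTStep T) :
    ∀ k : ℕ, ∀ μ : Fin n → Option (Fin m), M.IsMatching μ → M.OneEnvyFree μ →
      (M.phiBound - M.phiTot μ).toNat < k → ∃ r : ℕ, M.Stable (T^[r] μ) := by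
  intro k
  induction k with
  | zero => intro μ _ _ h; omega
  | succ k ih =>
    intro μ hμ h1 hk
    by_cases hbl : ∃ a b, M.Blocks μ a b
    · obtain ⟨hm', h1', hstep⟩ := step_lemma hT hμ h1 hbl
      have hlt : M.phiTot μ < M.phiTot (T μ) := phiTot_lt_step hstep
      have hb1 : M.phiTot (T μ) ≤ M.phiBound := M.phiTot_le (T μ)
      have hb2 : M.phiTot μ ≤ M.phiBound := M.phiTot_le μ
      have hk' : (M.phiBound - M.phiTot (T μ)).toNat < k := by omega
      obtain ⟨r, hr⟩ := ih (T μ) hm' h1' hk'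
      exact ⟨r + 1, by rwa [Function.iterate_succ_apply]⟩
    · push_neg at hbl
      exact ⟨0, ⟨h1.1.1, fun a b hb => hbl a b hb⟩⟩

end Market

/-- for every 1-envy-free matching `μ`, (i) `T μ ≿ μ` with strict
preference for at most one college, and (ii) finitely many iterations of `T`
reach a stable matching. -/
theorem T_improves_and_finitely_stabilizes {n m : ℕ} (M : Market n m)
    (T : (Fin n → Option (Fin m)) → Fin n → Option (Fin m)) (hT : M.IsTStep T)
    (μ : Fin n → Option (Fin m)) (hμ : M.IsMatching μ) (h1 : M.OneEnvyFree μ) :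
    M.CollegesWeakPref (T μ) μ ∧
    (Finset.univ.filter fun j =>
      M.SetPref j (M.assigned (T μ) j) (M.assigned μ j)).card ≤ 1 ∧
    ∃ r : ℕ, M.Stable (T^[r] μ) := by
  classical
  have hreach : ∃ r : ℕ, M.Stable (T^[r] μ) :=
    Market.reach_stable hT ((M.phiBound - M.phiTot μ).toNat + 1) μ hμ h1 (Nat.lt_succ_self _)
  by_cases hbl : ∃ a b, M.Blocks μ a b
  · obtain ⟨-, -, j₀, hne, hsp⟩ := Market.step_lemma hT hμ h1 hbl
    refine ⟨?_, ?_, hreach⟩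
    · intro j'
      by_cases hj' : j' = j₀
      · subst hj'; exact Or.inr hsp
      · exact Or.inl (hne j' hj')
    · have hsub : (Finset.univ.filter fun j =>
          M.SetPref j (M.assigned (T μ) j) (M.assigned μ j)) ⊆ {j₀} := by
        intro j' hj'
        rw [Finset.mem_filter] at hj'
        rw [Finset.mem_singleton]
        by_contra h
        exact Market.setPref_irrefl (hne j' h ▸ hj'.2)
      calc _ ≤ ({j₀} : Finset (Fin m)).card := Finset.card_le_card hsub
        _ = 1 := Finset.card_singleton _
  · push_neg at hbl
    have hTμ : T μ = μ := (hT μ hμ h1).1 hbl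
    refine ⟨fun j => Or.inl (by rw [hTμ]), ?_, hreach⟩
    have : (Finset.univ.filter fun j =>
        M.SetPref j (M.assigned (T μ) j) (M.assigned μ j)) = ∅ := by
      refine Finset.filter_false_of_mem fun j _ h => ?_
      rw [hTμ] at h
      exact Market.setPref_irrefl h
    rw [this, Finset.card_empty]
    omega
end

section
/- Let μ be a 1-envy-free many-to-one matching. Then the corresponding matching μ̄ in the related one-to-one market (obtained by splitting each college j into q_j ordered positions with identical preferences over students, and students preferring positions of better colleges and, within a college, positions with smaller index) is 1-simple: it is individually rational, every blocking pair involves an unmatched student, and either μ̄ is stable or there is exactly one student belonging to every blocking pair of μ̄. -/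
attribute [local instance] Classical.propDecidable

noncomputable section AuxHelpers

namespace Market

variable {n m : ℕ}

lemma aux_cPref_trichotomy (M : Market n m) (j : Fin m) (a b : Option (Fin n)) :
    M.cPref j a b ∨ a = b ∨ M.cPref j b a := by
  rcases lt_trichotomy (M.cRank j a) (M.cRank j b) with h | h | h
  · exact Or.inl h
  · exact Or.inr (Or.inl (M.cRank_inj j h))
  · exact Or.inr (Or.inr h)

/-- Number of students assigned to `j` whom `j` prefers to `i`. -/
def auxRcount (M : Market n m) (μ : Fin n → Option (Fin m)) (j : Fin m) (i : Fin n) : ℕ :=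
  ((M.assigned μ j).filter fun i' => M.cPref j (some i') (some i)).card

lemma auxRcount_lt_card (M : Market n m) {μ : Fin n → Option (Fin m)} {j : Fin m} {i : Fin n}
    (hi : i ∈ M.assigned μ j) :
    M.auxRcount μ j i < (M.assigned μ j).card := by
  have hsub : ((M.assigned μ j).filter fun i' => M.cPref j (some i') (some i))
      ⊆ (M.assigned μ j).erase i := by
    intro x hx
    rw [Finset.mem_filter] at hx
    refine Finset.mem_erase.mpr ⟨?_, hx.1⟩
    rintro rfl
    exact lt_irrefl _ hx.2
  calc M.auxRcount μ j i ≤ ((M.assigned μ j).erase i).card := Finset.card_le_card hsub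
    _ < (M.assigned μ j).card := Finset.card_erase_lt_of_mem hi

lemma auxRcount_lt (M : Market n m) {μ : Fin n → Option (Fin m)} {j : Fin m} {a b : Fin n}
    (ha : a ∈ M.assigned μ j) (hab : M.cPref j (some a) (some b)) :
    M.auxRcount μ j a < M.auxRcount μ j b := by
  have hsub : insert a ((M.assigned μ j).filter fun i' => M.cPref j (some i') (some a))
      ⊆ (M.assigned μ j).filter fun i' => M.cPref j (some i') (some b) := by
    intro x hx
    rcases Finset.mem_insert.mp hx with rfl | hx
    · exact Finset.mem_filter.mpr ⟨ha, hab⟩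
    · have hx' := Finset.mem_filter.mp hx
      exact Finset.mem_filter.mpr ⟨hx'.1, lt_trans hx'.2 hab⟩
  have hnot : a ∉ (M.assigned μ j).filter fun i' => M.cPref j (some i') (some a) := by
    intro hmem
    exact lt_irrefl _ (Finset.mem_filter.mp hmem).2
  have hle := Finset.card_le_card hsub
  rw [Finset.card_insert_of_notMem hnot] at hle
  unfold auxRcount
  omega

lemma auxRcount_surj (M : Market n m) {μ : Fin n → Option (Fin m)} {j : Fin m} {t : ℕ}
    (ht : t < (M.assigned μ j).card) :
    ∃ a ∈ M.assigned μ j, M.auxRcount μ j a = t := by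
  have hinj : Set.InjOn (M.auxRcount μ j) (M.assigned μ j) := by
    intro a ha b hb hab
    by_contra hne
    rcases M.aux_cPref_trichotomy j (some a) (some b) with h | h | h
    · exact absurd hab (Nat.ne_of_lt (M.auxRcount_lt ha h))
    · exact hne (Option.some_injective _ h)
    · exact absurd hab.symm (Nat.ne_of_lt (M.auxRcount_lt hb h))
  have himg : (M.assigned μ j).image (M.auxRcount μ j)
      = Finset.range (M.assigned μ j).card := by
    apply Finset.eq_of_subset_of_card_le
    · intro x hx
      rcases Finset.mem_image.mp hx with ⟨a, ha, rfl⟩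
      exact Finset.mem_range.mpr (M.auxRcount_lt_card ha)
    · rw [Finset.card_range, Finset.card_image_of_injOn hinj]
  have : t ∈ (M.assigned μ j).image (M.auxRcount μ j) := by
    rw [himg]; exact Finset.mem_range.mpr ht
  rcases Finset.mem_image.mp this with ⟨a, ha, h⟩
  exact ⟨a, ha, h⟩

lemma aux_pos_of_assigned (M : Market n m) {μ : Fin n → Option (Fin m)}
    {μN : Fin n → Option (Market.Position M)} {μM : Market.Position M → Option (Fin n)}
    (hc : M.Corresponds μ μN μM) {j : Fin m} {i : Fin n} (hi : i ∈ M.assigned μ j) :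
    ∃ s : Fin (M.quota j), μN i = some ⟨j, s⟩ ∧ (s : ℕ) = M.auxRcount μ j i := by
  have hij : μ i = some j := (Finset.mem_filter.mp hi).2
  obtain ⟨s, hs⟩ := (hc.2.1 i j).mpr hij
  exact ⟨s, hs, hc.2.2 i j s hs⟩

lemma aux_occupant (M : Market n m) {μ : Fin n → Option (Fin m)}
    {μN : Fin n → Option (Market.Position M)} {μM : Market.Position M → Option (Fin n)}
    (hc : M.Corresponds μ μN μM) {j : Fin m} {t : Fin (M.quota j)}
    (ht : (t : ℕ) < (M.assigned μ j).card) :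
    ∃ a ∈ M.assigned μ j, μM ⟨j, t⟩ = some a ∧ M.auxRcount μ j a = (t : ℕ) := by
  obtain ⟨a, ha, hra⟩ := M.auxRcount_surj ht
  obtain ⟨s, hs, hsv⟩ := M.aux_pos_of_assigned hc ha
  have hst : s = t := Fin.ext (by omega)
  subst hst
  exact ⟨a, ha, (hc.1 a ⟨j, s⟩).mp hs, hra⟩

lemma aux_posBlocks_blocks (M : Market n m) {μ : Fin n → Option (Fin m)}
    {μN : Fin n → Option (Market.Position M)} {μM : Market.Position M → Option (Fin n)}
    (hμ : M.IsMatching μ) (hIR : M.IndRational μ) (hc : M.Corresponds μ μN μM)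
    {i : Fin n} {p : Market.Position M} (hb : M.PosBlocks μN μM i p) :
    M.Blocks μ i p.1 := by
  obtain ⟨j, s⟩ := p
  obtain ⟨hbetter, hcpref⟩ := hb
  show M.Blocks μ i j
  have hsp : M.sPref i (some j) (μ i) := by
    cases hN : μN i with
    | none =>
        have hmu : μ i = none := by
          cases hmu : μ i with
          | none => rfl
          | some j' =>
              obtain ⟨s', hs'⟩ := (hc.2.1 i j').mpr hmu
              rw [hN] at hs'
              exact absurd hs' (by simp)
        rw [hN] at hbetter
        rw [hmu]
        exact hbetter
    | some q =>
        obtain ⟨j', s'⟩ := q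
        have hmu : μ i = some j' := (hc.2.1 i j').mp ⟨s', hN⟩
        rw [hN] at hbetter
        rcases hbetter with h | ⟨heq, hlt⟩
        · rw [hmu]; exact h
        · exfalso
          dsimp at heq hlt
          subst heq
          have hi : i ∈ M.assigned μ j := Finset.mem_filter.mpr ⟨Finset.mem_univ _, hmu⟩
          have hs'v : (s' : ℕ) = M.auxRcount μ j i := hc.2.2 i j s' hN
          have hlt2 : (s : ℕ) < (M.assigned μ j).card := by
            have := M.auxRcount_lt_card hi
            omega
          obtain ⟨a, ha, hMa, hra⟩ := M.aux_occupant hc hlt2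
          have hai : M.cPref j (some a) (some i) := by
            rcases M.aux_cPref_trichotomy j (some a) (some i) with h | h | h
            · exact h
            · exfalso
              rw [Option.some_injective _ h] at hra
              omega
            · exfalso
              have := M.auxRcount_lt hi h
              omega
          rw [hMa] at hcpref
          exact lt_asymm hcpref hai
  rcases lt_or_eq_of_le (hμ j) with hlt | heq
  · refine ⟨hsp, Or.inl ⟨hlt, ?_⟩⟩
    cases hM : μM ⟨j, s⟩ with
    | none =>
        rw [hM] at hcpref
        exact hcpref
    | some a =>
        rw [hM] at hcpref
        have haj : μ a = some j := (hc.2.1 a j).mp ⟨s, (hc.1 a ⟨j, s⟩).mpr hM⟩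
        have h1 : ¬ M.cPref j none (some a) := hIR.2 j a haj
        have h2 : M.cRank j (some a) ≠ M.cRank j none := fun h => by
          simpa using M.cRank_inj j h
        have h3 : M.cRank j (some a) < M.cRank j none := by
          unfold cPref at h1
          omega
        exact lt_trans hcpref h3
  · refine ⟨hsp, Or.inr ⟨heq, ?_⟩⟩
    cases hM : μM ⟨j, s⟩ with
    | none =>
        exfalso
        have hlt2 : (s : ℕ) < (M.assigned μ j).card := by rw [heq]; exact s.isLt
        obtain ⟨a, _, hMa, _⟩ := M.aux_occupant hc hlt2
        rw [hM] at hMa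
        exact absurd hMa (by simp)
    | some a =>
        have haj : μ a = some j := (hc.2.1 a j).mp ⟨s, (hc.1 a ⟨j, s⟩).mpr hM⟩
        refine ⟨a, Finset.mem_filter.mpr ⟨Finset.mem_univ _, haj⟩, ?_⟩
        rw [hM] at hcpref
        exact hcpref

lemma aux_posIR (M : Market n m) {μ : Fin n → Option (Fin m)}
    {μN : Fin n → Option (Market.Position M)} {μM : Market.Position M → Option (Fin n)}
    (hIR : M.IndRational μ) (hc : M.Corresponds μ μN μM) : M.PosIR μN μM := by
  constructor
  · intro i
    cases hN : μN i with
    | none => simp [PosBetter]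
    | some q =>
        obtain ⟨j, s⟩ := q
        have hmu : μ i = some j := (hc.2.1 i j).mp ⟨s, hN⟩
        have h := hIR.1 i
        rw [hmu] at h
        exact h
  · intro p
    obtain ⟨j, s⟩ := p
    show ¬ M.cPref j none (μM ⟨j, s⟩)
    cases hM : μM ⟨j, s⟩ with
    | none => exact lt_irrefl _
    | some a =>
        have haj : μ a = some j := (hc.2.1 a j).mp ⟨s, (hc.1 a ⟨j, s⟩).mpr hM⟩
        exact hIR.2 j a haj

end Market

end AuxHelpers

/-- the one-to-one matching of the related market corresponding to
a 1-envy-free many-to-one matching is 1-simple. -/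
theorem corresponding_matching_oneSimple {n m : ℕ} (M : Market n m)
    (μ : Fin n → Option (Fin m))
    (μN : Fin n → Option (Market.Position M)) (μM : Market.Position M → Option (Fin n))
    (hμ : M.IsMatching μ) (h1 : M.OneEnvyFree μ)
    (hc : M.Corresponds μ μN μM) :
    M.PosOneSimple μN μM := by
  obtain ⟨⟨hIR, hEF⟩, hAlt⟩ := h1
  have hposIR := M.aux_posIR hIR hc
  have key : ∀ i p, M.PosBlocks μN μM i p → M.Blocks μ i p.1 :=
    fun i p hb => M.aux_posBlocks_blocks hμ hIR hc hb
  have hsimple : M.PosSimple μN μM := by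
    refine ⟨hposIR, fun i p hb => ?_⟩
    have hmu : μ i = none := hEF i p.1 (key i p hb)
    cases hN : μN i with
    | none => rfl
    | some q =>
        obtain ⟨j', s'⟩ := q
        have := (hc.2.1 i j').mp ⟨s', hN⟩
        rw [hmu] at this
        exact absurd this (by simp)
  refine ⟨hsimple, ?_⟩
  rcases hAlt with hst | ⟨i₀, hi₀, _⟩
  · exact Or.inl ⟨hposIR, fun i p hb => hst.2 i p.1 (key i p hb)⟩
  · by_cases hps : M.PosStable μN μM
    · exact Or.inl hps
    · right
      have hex : ∃ i p, M.PosBlocks μN μM i p := by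
        by_contra h
        push_neg at h
        exact hps ⟨hposIR, h⟩
      obtain ⟨i₁, p₁, hb₁⟩ := hex
      refine ⟨i₀, fun i' p hb => hi₀ i' p.1 (key i' p hb), ?_⟩
      intro y hy
      have h1 := hy i₁ p₁ hb₁
      have h2 := hi₀ i₁ p₁.1 (key i₁ p₁ hb₁)
      exact h1 ▸ h2
end
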